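/- Let α, β > 0 with √α + √β ≥ √2. Then the Mañé critical value of the toy model vanishes: the infimum, over all smooth functions f : ℝ² → ℝ, of sup_{(x,y)∈ℝ²} H((x,y), ∇f(x,y)) is equal to 0, where H((x,y),(p₁,p₂)) = ½((p₁+y)² + (p₂−x)²) − αx² − βy². -/

import Mathlib

/-- Hamiltonian of the planar electromagnetic toy model:
`H((x,y),(p₁,p₂)) = ½((p₁+y)² + (p₂−x)²) − αx² − βy²`. -/
noncomputable def toyH (α β : ℝ) (q p : ℝ × ℝ) : ℝ :=
  (1/2) * ((p.1 + q.2)^2 + (p.2 - q.1)^2) - α*q.1^2 - β*q.2^2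

/-- The (Euclidean) gradient of a function `f : ℝ² → ℝ`. -/
noncomputable def gradF (f : ℝ × ℝ → ℝ) (q : ℝ × ℝ) : ℝ × ℝ :=
  (fderiv ℝ f q (1, 0), fderiv ℝ f q (0, 1))

lemma gradF_bilinear (l : ℝ) (q : ℝ × ℝ) :
    gradF (fun q : ℝ × ℝ => l * (q.1 * q.2)) q = (l * q.2, l * q.1) := by
  have hfst : HasFDerivAt (fun q : ℝ × ℝ => q.1)
      (ContinuousLinearMap.fst ℝ ℝ ℝ) q := hasFDerivAt_fst
  have hsnd : HasFDerivAt (fun q : ℝ × ℝ => q.2)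
      (ContinuousLinearMap.snd ℝ ℝ ℝ) q := hasFDerivAt_snd
  have hmul := (hfst.mul hsnd).const_mul l
  have hd : fderiv ℝ (fun q : ℝ × ℝ => l * (q.1 * q.2)) q = _ := hmul.fderiv
  simp only [gradF, hd]
  simp

/-- If `√α + √β ≥ √2`, the Mañé critical value
`c_u = inf_{f smooth} sup_q H(q, df(q))` of the toy model vanishes. -/
theorem stmt_5 (α β : ℝ) (hα : 0 < α) (hβ : 0 < β)
    (h : Real.sqrt 2 ≤ Real.sqrt α + Real.sqrt β) :
    sInf {c : ℝ | ∃ f : ℝ × ℝ → ℝ, ContDiff ℝ (⊤ : ℕ∞) f ∧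
        ∀ q : ℝ × ℝ, toyH α β q (gradF f q) ≤ c} = 0 := by
  set s := Real.sqrt (2*α) with hs
  set t := Real.sqrt (2*β) with ht
  have hs0 : 0 ≤ s := Real.sqrt_nonneg _
  have ht0 : 0 ≤ t := Real.sqrt_nonneg _
  have hs2 : s^2 = 2*α := Real.sq_sqrt (by linarith)
  have ht2 : t^2 = 2*β := Real.sq_sqrt (by linarith)
  have hst : 2 ≤ s + t := by
    have h2 : (Real.sqrt 2)^2 = 2 := Real.sq_sqrt (by norm_num)
    have hsa : s = Real.sqrt 2 * Real.sqrt α := by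
      rw [hs, ← Real.sqrt_mul (by norm_num)]
    have htb : t = Real.sqrt 2 * Real.sqrt β := by
      rw [ht, ← Real.sqrt_mul (by norm_num)]
    have := mul_le_mul_of_nonneg_left h (Real.sqrt_nonneg 2)
    nlinarith [Real.sqrt_nonneg 2]
  set l := max (1 - s) (-1 - t) with hl
  have hla : 1 - s ≤ l := le_max_left _ _
  have hlc : -1 - t ≤ l := le_max_right _ _
  have hlb : l ≤ 1 + s := by
    apply max_le <;> linarith
  have hld : l ≤ -1 + t := by
    apply max_le <;> linarith
  have hl1 : (l - 1)^2 ≤ 2*α := by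
    have := sq_le_sq' (by linarith : -s ≤ l - 1) (by linarith : l - 1 ≤ s)
    linarith [hs2 ▸ this]
  have hl2 : (l + 1)^2 ≤ 2*β := by
    have := sq_le_sq' (by linarith : -t ≤ l + 1) (by linarith : l + 1 ≤ t)
    linarith [ht2 ▸ this]
  apply le_antisymm
  · apply csInf_le
    · refine ⟨0, ?_⟩
      rintro c ⟨f, -, hf⟩
      have := hf (0, 0)
      simp only [toyH] at this
      nlinarith [sq_nonneg (gradF f (0,0)).1, sq_nonneg (gradF f (0,0)).2]
    · refine ⟨fun q : ℝ × ℝ => l * (q.1 * q.2), ?_, ?_⟩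
      · exact contDiff_const.mul (contDiff_fst.mul contDiff_snd)
      · intro q
        rw [gradF_bilinear]
        simp only [toyH]
        nlinarith [sq_nonneg q.1, sq_nonneg q.2]
  · apply le_csInf
    · exact ⟨0, fun q : ℝ × ℝ => l * (q.1 * q.2),
        contDiff_const.mul (contDiff_fst.mul contDiff_snd), by
          intro q
          rw [gradF_bilinear]
          simp only [toyH]
          nlinarith [sq_nonneg q.1, sq_nonneg q.2]⟩
    · rintro c ⟨f, -, hf⟩
      have := hf (0, 0)
      simp only [toyH] at this
      nlinarith [sq_nonneg (gradF f (0,0)).1, sq_nonneg (gradF f (0,0)).2]
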